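/- Let G = Σ1 × ⋯ × Σr (r ≥ 2) with generators a_i^(k), b_i^(k), and set x_i = a_i^(1), c_i = a_i^(1)(b_i^(1))^{-1}, d = [b_1^(1), b_2^(1)], f_i^(k) = a_i^(1)(a_i^(k))^{-1}. Then in G: [x_1, x_2] = d^{-1}, and the element [a_1^(1), a_2^(1)][b_1^(1), b_2^(1)] (which equals 1) can be rewritten as d^{-1} c_1^{-1} f_1^(k) c_2^{-1} (f_1^(k))^{-1} d^{-1} f_2^(k) c_1 (f_2^(k))^{-1} c_2 for each k ∈ {2,…,r}; in particular this latter word equals 1 in G. -/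

import Mathlib

open FreeGroup
open scoped commutatorElement

def surfRels : Set (FreeGroup (Fin 4)) :=
  {⁅FreeGroup.of (0 : Fin 4), FreeGroup.of (1 : Fin 4)⁆ * ⁅FreeGroup.of (2 : Fin 4), FreeGroup.of (3 : Fin 4)⁆}

/-- The genus-2 surface group. -/
abbrev Surf := PresentedGroup surfRels

def a (i : Fin 2) : Surf := PresentedGroup.of ⟨i.val, by omega⟩
def b (i : Fin 2) : Surf := PresentedGroup.of ⟨i.val + 2, by omega⟩

abbrev M := Multiplicative (ℤ × ℤ)

def φgen : Fin 4 → M :=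
  fun n => Multiplicative.ofAdd (if n.val = 0 ∨ n.val = 2 then ((1 : ℤ), (0 : ℤ)) else ((0 : ℤ), (1 : ℤ)))

lemma φrels : ∀ r ∈ surfRels, FreeGroup.lift φgen r = 1 := by
  rintro r hr
  simp only [surfRels, Set.mem_singleton_iff] at hr
  subst hr
  have h1 : (FreeGroup.lift φgen) (⁅FreeGroup.of (0 : Fin 4), FreeGroup.of (1 : Fin 4)⁆ * ⁅FreeGroup.of (2 : Fin 4), FreeGroup.of (3 : Fin 4)⁆) = ⁅φgen 0, φgen 1⁆ * ⁅φgen 2, φgen 3⁆ := by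
    simp [commutatorElement_def]
  rw [h1, commutatorElement_eq_one_iff_mul_comm.mpr (mul_comm _ _),
    commutatorElement_eq_one_iff_mul_comm.mpr (mul_comm _ _), one_mul]

/-- The homomorphism Σ → ℤ² sending aᵢ, bᵢ to the i-th standard basis vector. -/
def φ1 : Surf →* M := PresentedGroup.toGroup φrels

/-- The direct product of r genus-2 surface groups. -/
abbrev GG (r : ℕ) := ∀ _ : Fin r, Surf

def A (r : ℕ) (i : Fin 2) (k : Fin r) : GG r := Pi.mulSingle k (a i)
def B (r : ℕ) (i : Fin 2) (k : Fin r) : GG r := Pi.mulSingle k (b i)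

/-- The homomorphism G = Σ₁ × ⋯ × Σr → ℤ² sending all aᵢ, bᵢ to eᵢ. -/
def Φ (r : ℕ) : GG r →* M := ∏ k : Fin r, φ1.comp (Pi.evalMonoidHom (fun _ => Surf) k)

/-- `p` and `q` drop out of the conjugates of `(y v⁻¹)⁻¹` by `x p` and of `x u⁻¹` by `y q`;
after replacing `⁅u, v⁆⁻¹` by `⁅x, y⁆`, what is left freely reduces to `⁅x, y⁆ * ⁅u, v⁆`. -/
theorem rewritten_relator_eq_one {G : Type*} [Group G] {x y u v p q : G}
    (h : ⁅x, y⁆ * ⁅u, v⁆ = 1) (hp : Commute p (y * v⁻¹)) (hq : Commute q (x * u⁻¹)) :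
    ⁅u, v⁆⁻¹ * (x * u⁻¹)⁻¹ * (x * p) * (y * v⁻¹)⁻¹ * (x * p)⁻¹ * ⁅u, v⁆⁻¹ * (y * q) *
      (x * u⁻¹) * (y * q)⁻¹ * (y * v⁻¹) = 1 := by
  have hd : ⁅u, v⁆⁻¹ = ⁅x, y⁆ := inv_eq_of_mul_eq_one_left h
  have hpx : x * p * (y * v⁻¹)⁻¹ * (x * p)⁻¹ = x * (y * v⁻¹)⁻¹ * x⁻¹ := by
    rw [mul_assoc x p, hp.inv_right.eq]; group
  have hqy : y * q * (x * u⁻¹) * (y * q)⁻¹ = y * (x * u⁻¹) * y⁻¹ := by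
    rw [mul_assoc y q, hq.eq]; group
  calc _ = ⁅u, v⁆⁻¹ * (x * u⁻¹)⁻¹ * (x * p * (y * v⁻¹)⁻¹ * (x * p)⁻¹) * ⁅u, v⁆⁻¹ *
        (y * q * (x * u⁻¹) * (y * q)⁻¹) * (y * v⁻¹) := by group
    _ = ⁅x, y⁆ * (x * u⁻¹)⁻¹ * (x * (y * v⁻¹)⁻¹ * x⁻¹) * ⁅x, y⁆ *
        (y * (x * u⁻¹) * y⁻¹) * (y * v⁻¹) := by rw [hpx, hqy, hd]
    _ = ⁅x, y⁆ * ⁅u, v⁆ := by group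
    _ = 1 := h

theorem commutator_a_mul_commutator_b : ⁅a 0, a 1⁆ * ⁅b 0, b 1⁆ = (1 : Surf) := by
  have h : PresentedGroup.mk surfRels (⁅of (0 : Fin 4), of (1 : Fin 4)⁆ *
      ⁅of (2 : Fin 4), of (3 : Fin 4)⁆) = 1 :=
    (QuotientGroup.eq_one_iff _).2 (Subgroup.subset_normalClosure rfl)
  rw [_root_.map_mul, map_commutatorElement, map_commutatorElement] at h
  exact h

theorem commutator_A_mul_commutator_B (r : ℕ) (o : Fin r) :
    ⁅A r 0 o, A r 1 o⁆ * ⁅B r 0 o, B r 1 o⁆ = 1 := by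
  simp only [A, B, ← MonoidHom.mulSingle_apply, ← map_commutatorElement]
  rw [← _root_.map_mul, commutator_a_mul_commutator_b, _root_.map_one]

theorem commute_A_inv_mul_B_inv (r : ℕ) {o k : Fin r} (hk : k ≠ o) (i j : Fin 2) :
    Commute (A r i k)⁻¹ (A r j o * (B r j o)⁻¹) :=
  ((Pi.mulSingle_commute hk _ _).mul_right (Pi.mulSingle_commute hk _ _).inv_right).inv_left

/-- In `G = Σ₁ × ⋯ × Σr`, with `xᵢ = aᵢ⁽¹⁾`: `[x₁, x₂] = d⁻¹`, and for each
`k ∈ {2,…,r}` the word `d⁻¹ c₁⁻¹ f₁⁽ᵏ⁾ c₂⁻¹ (f₁⁽ᵏ⁾)⁻¹ d⁻¹ f₂⁽ᵏ⁾ c₁ (f₂⁽ᵏ⁾)⁻¹ c₂`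
(a rewriting of `[a₁⁽¹⁾,a₂⁽¹⁾][b₁⁽¹⁾,b₂⁽¹⁾]`) equals `1`. -/
theorem stmt12 (r : ℕ) (hr : 2 ≤ r) :
    (letI o : Fin r := ⟨0, by omega⟩
     letI c : Fin 2 → GG r := fun i => A r i o * (B r i o)⁻¹
     letI d : GG r := ⁅B r 0 o, B r 1 o⁆
     ⁅A r 0 o, A r 1 o⁆ = d⁻¹ ∧
     ∀ k : Fin r, k ≠ o →
       letI f : Fin 2 → GG r := fun i => A r i o * (A r i k)⁻¹
       d⁻¹ * (c 0)⁻¹ * f 0 * (c 1)⁻¹ * (f 0)⁻¹ * d⁻¹ * f 1 * c 0 * (f 1)⁻¹ * c 1 = 1) :=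
  ⟨eq_inv_of_mul_eq_one_left (commutator_A_mul_commutator_B r _), fun _ hk =>
    rewritten_relator_eq_one (commutator_A_mul_commutator_B r _)
      (commute_A_inv_mul_B_inv r hk 0 1) (commute_A_inv_mul_B_inv r hk 1 0)⟩
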